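/- Let m > 1. There exists a constant C > 0, depending only on m, such that for all a, b ∈ ℝ: (β(a) − β(b))(a − b) ≥ C(⟦a⟧^{(m+1)/(2m)} − ⟦b⟧^{(m+1)/(2m)})². -/

import Mathlib

/-- Signed power: `spow r x = |x|^(r-1) * x`. -/
noncomputable def spow (r x : ℝ) : ℝ := |x| ^ (r - 1) * x

/-! With `q = 1/m` and `p = (q + 1)/2`, both differences are integrals:
`⟦a⟧^q - ⟦b⟧^q = q ∫_b^a |t|^(q-1)` and `⟦a⟧^p - ⟦b⟧^p = p ∫_b^a |t|^(p-1)`. Since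
`(|t|^(p-1))² = |t|^(q-1)`, Cauchy–Schwarz on `[b, a]` gives the inequality with `C = q / p²`. -/

open MeasureTheory Set intervalIntegral
open scoped Interval

lemma spow_neg (r x : ℝ) : spow r (-x) = -spow r x := by
  simp only [spow, abs_neg]; ring

lemma spow_of_nonneg {r x : ℝ} (hr : r ≠ 0) (hx : 0 ≤ x) : spow r x = x ^ r := by
  rcases hx.eq_or_lt with rfl | hx
  · simp [spow, Real.zero_rpow hr]
  · rw [spow, abs_of_pos hx, ← Real.rpow_add_one hx.ne', sub_add_cancel]

lemma intervalIntegrable_abs_rpow {s : ℝ} (hs : -1 < s) (a b : ℝ) :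
    IntervalIntegrable (fun t => |t| ^ s) volume a b := by
  have of_nonneg : ∀ c, 0 ≤ c → IntervalIntegrable (fun t => |t| ^ s) volume 0 c :=
    fun c hc => (intervalIntegrable_rpow' hs).congr fun t ht => by
      rw [uIoc_of_le hc] at ht
      simp only [abs_of_pos ht.1]
  have from_zero : ∀ c, IntervalIntegrable (fun t => |t| ^ s) volume 0 c := by
    intro c
    rcases le_total 0 c with hc | hc
    · exact of_nonneg c hc
    · simpa using (IntervalIntegrable.iff_comp_neg).mp (of_nonneg (-c) (by linarith))
  exact (from_zero a).symm.trans (from_zero b)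

lemma integral_abs_rpow_sub_one {r : ℝ} (hr : 0 < r) (x : ℝ) :
    ∫ t in (0 : ℝ)..x, |t| ^ (r - 1) = spow r x / r := by
  have of_nonneg : ∀ y, 0 ≤ y → ∫ t in (0 : ℝ)..y, |t| ^ (r - 1) = spow r y / r := by
    intro y hy
    rw [integral_congr (g := fun t => t ^ (r - 1)) fun t ht => ?_,
      integral_rpow (Or.inl (by linarith)), sub_add_cancel, Real.zero_rpow hr.ne',
      spow_of_nonneg hr.ne' hy, sub_zero]
    rw [uIcc_of_le hy] at ht
    simp only [abs_of_nonneg ht.1]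
  rcases le_total 0 x with hx | hx
  · exact of_nonneg x hx
  · have hneg := integral_comp_neg (a := 0) (b := x) fun t => |t| ^ (r - 1)
    simp only [abs_neg, neg_zero] at hneg
    rw [hneg, integral_symm, of_nonneg (-x) (by linarith), spow_neg, neg_div, neg_neg]

lemma spow_sub_spow_eq_integral {r : ℝ} (hr : 0 < r) (a b : ℝ) :
    spow r a - spow r b = r * ∫ t in b..a, |t| ^ (r - 1) := by
  have hs : -1 < r - 1 := by linarith
  rw [← integral_interval_sub_left (intervalIntegrable_abs_rpow hs 0 a)
      (intervalIntegrable_abs_rpow hs 0 b), integral_abs_rpow_sub_one hr,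
    integral_abs_rpow_sub_one hr]
  field_simp

lemma sq_intervalIntegral_le {f : ℝ → ℝ} {a b : ℝ} (hf : IntervalIntegrable f volume b a)
    (hf2 : IntervalIntegrable (fun t => f t ^ 2) volume b a) :
    (∫ t in b..a, f t) ^ 2 ≤ (a - b) * ∫ t in b..a, f t ^ 2 := by
  rcases eq_or_ne a b with rfl | hab
  · simp
  have hvol : volume (Ι b a) = ENNReal.ofReal |a - b| := Real.volume_uIoc
  have jensen := (even_two.convexOn_pow (𝕜 := ℝ)).map_set_average_le
    (continuous_pow 2).continuousOn isClosed_univ (by simp [hvol, sub_ne_zero.mpr hab])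
    (by simp [hvol]) (Filter.Eventually.of_forall fun _ => mem_univ _) hf.def' hf2.def'
  rw [interval_average_eq_div, interval_average_eq_div] at jensen
  have hab' : a - b ≠ 0 := sub_ne_zero.mpr hab
  calc (∫ t in b..a, f t) ^ 2 = (a - b) ^ 2 * ((∫ t in b..a, f t) / (a - b)) ^ 2 := by
        field_simp
    _ ≤ (a - b) ^ 2 * ((∫ t in b..a, f t ^ 2) / (a - b)) := by gcongr
    _ = (a - b) * ∫ t in b..a, f t ^ 2 := by field_simp

lemma mul_sq_spow_sub_le {p q : ℝ} (hq : 0 < q) (hpq : 2 * p = q + 1) (a b : ℝ) :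
    q * (spow p a - spow p b) ^ 2 ≤ p ^ 2 * ((spow q a - spow q b) * (a - b)) := by
  have hp : 0 < p := by linarith
  have sq_abs_rpow : ∀ t : ℝ, (|t| ^ (p - 1)) ^ 2 = |t| ^ (q - 1) := fun t => by
    rw [← Real.rpow_mul_natCast (abs_nonneg t)]
    congr 1
    push_cast
    linarith
  have cauchy_schwarz := sq_intervalIntegral_le (f := fun t => |t| ^ (p - 1)) (a := a) (b := b)
    (intervalIntegrable_abs_rpow (by linarith) b a)
    ((intervalIntegrable_abs_rpow (s := q - 1) (by linarith) b a).congr fun t _ =>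
      (sq_abs_rpow t).symm)
  simp only [sq_abs_rpow] at cauchy_schwarz
  rw [spow_sub_spow_eq_integral hp, spow_sub_spow_eq_integral hq]
  calc q * (p * ∫ t in b..a, |t| ^ (p - 1)) ^ 2
      = p ^ 2 * (q * (∫ t in b..a, |t| ^ (p - 1)) ^ 2) := by ring
    _ ≤ p ^ 2 * (q * ((a - b) * ∫ t in b..a, |t| ^ (q - 1))) := by gcongr
    _ = p ^ 2 * (q * (∫ t in b..a, |t| ^ (q - 1)) * (a - b)) := by ring

/-- For `m > 1` there is `C > 0`, depending only on `m`, such that for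
all `a, b ∈ ℝ`: `(β(a) − β(b))(a − b) ≥ C(⟦a⟧^{(m+1)/(2m)} − ⟦b⟧^{(m+1)/(2m)})²`,
where `β(θ) = ⟦θ⟧^{1/m}`. -/
theorem stmt5 (m : ℝ) (hm : 1 < m) :
    ∃ C : ℝ, 0 < C ∧ ∀ a b : ℝ,
      (spow m⁻¹ a - spow m⁻¹ b) * (a - b) ≥
        C * (spow ((m + 1) / (2 * m)) a - spow ((m + 1) / (2 * m)) b) ^ 2 := by
  have hm0 : 0 < m := by linarith
  set p := (m + 1) / (2 * m)
  refine ⟨m⁻¹ / p ^ 2, by positivity, fun a b => ?_⟩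
  have key := mul_sq_spow_sub_le (p := p) (inv_pos.mpr hm0) (by simp only [p]; field_simp; ring) a b
  rw [ge_iff_le, div_mul_eq_mul_div, div_le_iff₀ (by positivity)]
  linarith
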